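/- Let k ≥ 1 and let ζ ∈ ℂ, ζ ≠ 0, be such that ζ is not a root of unity (ζ^m ≠ 1 for every m ≥ 1). Then: (i) for every integer ℓ with 1 ≤ ℓ ≤ k, the eigenspace {v : I_k → ℂ | D(k,ζ).mulVec v = ζ^ℓ • v} has ℂ-dimension C(k, b) if k − ℓ = 2b for some b ∈ ℕ, and dimension 0 if k − ℓ is odd; and (ii) if k is even, then for each ε ∈ {1, −1} the subspace {v : I_k → ℂ | D(k,ζ).mulVec v = v and P_k.mulVec v = (ε · i^(−(k : ℤ))) • v} has ℂ-dimension (1/2)·C(k, k/2), i.e. twice its dimension equals C(k, k/2). (These are the dimensions of the irreducible Z_k(D_∞)-modules Z_k^{(ℓ)}, Z_k^{(0)}, and Z_k^{(0′)}.) -/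
import Mathlib

open Matrix

/-- The number of `-1` factors (encoded as `true`) in a simple tensor index. -/
def wt {k : ℕ} (r : Fin k → Bool) : ℕ := (Finset.univ.filter fun i => r i = true).card

/-- The sign-reversal `-r` of an index, `(−r) i = ¬ (r i)`. -/
def negt {k : ℕ} (r : Fin k → Bool) : Fin k → Bool := fun i => !(r i)

/-- The matrix of `g^{⊗k}` on `V^{⊗k}` for `g = diag(ζ⁻¹, ζ)`. -/
noncomputable def Dmat (k : ℕ) (ζ : ℂ) : Matrix (Fin k → Bool) (Fin k → Bool) ℂ :=
  Matrix.diagonal fun r => ζ ^ ((k : ℤ) - 2 * (wt r : ℤ))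

/-- The 0–1 matrix with `P r s = 1` iff `s = −r`. -/
noncomputable def Pmat (k : ℕ) : Matrix (Fin k → Bool) (Fin k → Bool) ℂ :=
  Matrix.of fun r s => if s = negt r then 1 else 0

/-- The eigenspace `{v | M.mulVec v = μ • v}` as a submodule of `I → ℂ`. -/
noncomputable def eigSub {I : Type*} [Fintype I] (M : Matrix I I ℂ) (μ : ℂ) :
    Submodule ℂ (I → ℂ) where
  carrier := {v | M.mulVec v = μ • v}
  add_mem' := by
    intro a b ha hb
    simp only [Set.mem_setOf_eq] at *
    rw [Matrix.mulVec_add, ha, hb, smul_add]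
  zero_mem' := by
    simp only [Set.mem_setOf_eq, Matrix.mulVec_zero, smul_zero]
  smul_mem' := by
    intro c v hv
    simp only [Set.mem_setOf_eq] at *
    rw [Matrix.mulVec_smul, hv, smul_comm]

lemma negt_negt {k : ℕ} (r : Fin k → Bool) : negt (negt r) = r := by
  funext i; simp [negt]

lemma wt_le {k : ℕ} (r : Fin k → Bool) : wt r ≤ k := by
  have := Finset.card_filter_le Finset.univ (fun i => r i = true)
  simpa [wt] using this

lemma wt_negt {k : ℕ} (r : Fin k → Bool) : wt (negt r) = k - wt r := by
  classical
  have h := Finset.card_filter_add_card_filter_not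
    (s := (Finset.univ : Finset (Fin k))) (p := fun i => r i = true)
  have h2 : wt (negt r) = (Finset.univ.filter fun i => ¬ (r i = true)).card := by
    unfold wt negt
    congr 1
    apply Finset.filter_congr
    intro i _
    simp
  have h3 : (Finset.univ : Finset (Fin k)).card = k := by simp
  unfold wt at *
  omega

lemma card_wt_eq (k b : ℕ) : Fintype.card {r : Fin k → Bool // wt r = b} = k.choose b := by
  classical
  have e : {r : Fin k → Bool // wt r = b} ≃ {s : Finset (Fin k) // s.card = b} := {
    toFun := fun r => ⟨Finset.univ.filter fun i => r.1 i = true, r.2⟩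
    invFun := fun s => ⟨fun i => decide (i ∈ s.1), by
      unfold wt
      have h : (Finset.univ.filter fun i => decide (i ∈ s.1) = true) = s.1 := by
        ext i; simp
      rw [h, s.2]⟩
    left_inv := fun r => by
      ext i
      simp
    right_inv := fun s => by
      ext i
      simp }
  rw [Fintype.card_congr e, Fintype.card_finset_len, Fintype.card_fin]

lemma zpow_inj_of_not_root {ζ : ℂ} (hζ0 : ζ ≠ 0) (hζ : ∀ m : ℕ, 1 ≤ m → ζ ^ m ≠ 1) :
    ∀ a b : ℤ, ζ ^ a = ζ ^ b → a = b := by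
  have key : ∀ n : ℤ, ζ ^ n = 1 → n = 0 := by
    have pos : ∀ n : ℤ, 0 < n → ζ ^ n ≠ 1 := by
      intro n hn h
      have : ζ ^ n.toNat = 1 := by
        rw [← zpow_natCast, Int.toNat_of_nonneg hn.le]; exact h
      exact hζ n.toNat (by omega) this
    intro n hn
    rcases lt_trichotomy n 0 with h | h | h
    · exfalso
      apply pos (-n) (by omega)
      rw [_root_.zpow_neg, hn, inv_one]
    · exact h
    · exact absurd hn (pos n h)
  intro a b h
  have : ζ ^ (a - b) = 1 := by
    rw [zpow_sub₀ hζ0, h, div_self (zpow_ne_zero _ hζ0)]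
  have := key _ this
  omega

lemma finrank_suppSub {I : Type*} [Fintype I] (P : I → Prop) [DecidablePred P]
    (N : Submodule ℂ (I → ℂ)) (hN : ∀ v, v ∈ N ↔ ∀ i, ¬ P i → v i = 0) :
    Module.finrank ℂ N = Fintype.card {i // P i} := by
  classical
  let e : N ≃ₗ[ℂ] ({i // P i} → ℂ) := {
    toFun := fun v s => v.1 s.1
    invFun := fun x => ⟨fun i => if h : P i then x ⟨i, h⟩ else 0, by
      rw [hN]; intro i hi; simp [hi]⟩
    left_inv := fun v => by
      apply Subtype.ext
      funext i
      by_cases h : P i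
      · simp [h]
      · simp [h, ((hN v.1).mp v.2) i h]
    right_inv := fun x => by
      funext s
      simp [s.2]
    map_add' := fun v w => rfl
    map_smul' := fun c v => rfl }
  rw [e.finrank_eq]
  simp [Module.finrank_pi]

lemma mem_eigSub {I : Type*} [Fintype I] (M : Matrix I I ℂ) (μ : ℂ) (v : I → ℂ) :
    v ∈ eigSub M μ ↔ M.mulVec v = μ • v := Iff.rfl

lemma Pmat_mulVec {k : ℕ} (v : (Fin k → Bool) → ℂ) (r : Fin k → Bool) :
    (Pmat k).mulVec v r = v (negt r) := by
  classical
  simp [Pmat, Matrix.mulVec, dotProduct, ite_mul, one_mul, zero_mul]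

/-- Dimensions of the irreducible `Z_k(D_∞)`-modules `Z_k^{(ℓ)}` (for `1 ≤ ℓ ≤ k`)
and `Z_k^{(0)}`, `Z_k^{(0′)}` (for `k` even). -/
theorem stmt12 (k : ℕ) (hk : 1 ≤ k) (ζ : ℂ) (hζ0 : ζ ≠ 0)
    (hζ : ∀ m : ℕ, 1 ≤ m → ζ ^ m ≠ 1) :
    (∀ ℓ b : ℕ, 1 ≤ ℓ → ℓ ≤ k → k - ℓ = 2 * b →
        Module.finrank ℂ (eigSub (Dmat k ζ) (ζ ^ ℓ)) = k.choose b) ∧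
    (∀ ℓ : ℕ, 1 ≤ ℓ → ℓ ≤ k → Odd (k - ℓ) →
        Module.finrank ℂ (eigSub (Dmat k ζ) (ζ ^ ℓ)) = 0) ∧
    (Even k → ∀ ε : ℂ, ε = 1 ∨ ε = -1 →
        2 * Module.finrank ℂ
            ↥(eigSub (Dmat k ζ) 1 ⊓
              eigSub (Pmat k) (ε * Complex.I ^ (-(k : ℤ)))) =
          k.choose (k / 2)) := by
  classical
  have zinj := zpow_inj_of_not_root hζ0 hζ
  refine ⟨?_, ?_, ?_⟩
  · -- part (i)
    intro ℓ b hℓ1 hℓk hb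
    rw [finrank_suppSub (fun r => wt r = b) _ ?_, card_wt_eq]
    intro v
    rw [mem_eigSub, funext_iff]
    constructor
    · intro h r hr
      have h1 := h r
      rw [Dmat, Matrix.mulVec_diagonal, Pi.smul_apply, smul_eq_mul] at h1
      have hne : ζ ^ ((k:ℤ) - 2*(wt r:ℤ)) ≠ ζ ^ ℓ := by
        intro hc
        rw [← zpow_natCast ζ ℓ] at hc
        have := zinj _ _ hc
        omega
      have h2 : (ζ ^ ((k:ℤ) - 2*(wt r:ℤ)) - ζ ^ ℓ) * v r = 0 := by ring_nf; ring_nf at h1; rw [h1]; ring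
      rcases mul_eq_zero.mp h2 with h3 | h3
      · exact absurd (sub_eq_zero.mp h3) hne
      · exact h3
    · intro h r
      rw [Dmat, Matrix.mulVec_diagonal, Pi.smul_apply, smul_eq_mul]
      by_cases hr : wt r = b
      · congr 1
        rw [← zpow_natCast ζ ℓ]
        congr 1
        omega
      · rw [h r hr, mul_zero, mul_zero]
  · -- part (ii)
    intro ℓ hℓ1 hℓk hodd
    obtain ⟨c, hc⟩ := hodd
    rw [finrank_suppSub (fun _ => False) _ ?_]
    · simp
    intro v
    rw [mem_eigSub, funext_iff]
    constructor
    · intro h r _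
      have h1 := h r
      rw [Dmat, Matrix.mulVec_diagonal, Pi.smul_apply, smul_eq_mul] at h1
      have hne : ζ ^ ((k:ℤ) - 2*(wt r:ℤ)) ≠ ζ ^ ℓ := by
        intro hcc
        rw [← zpow_natCast ζ ℓ] at hcc
        have := zinj _ _ hcc
        omega
      have h2 : (ζ ^ ((k:ℤ) - 2*(wt r:ℤ)) - ζ ^ ℓ) * v r = 0 := by ring_nf; ring_nf at h1; rw [h1]; ring
      rcases mul_eq_zero.mp h2 with h3 | h3
      · exact absurd (sub_eq_zero.mp h3) hne
      · exact h3
    · intro h r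
      rw [Dmat, Matrix.mulVec_diagonal, Pi.smul_apply, smul_eq_mul,
        h r (not_false), mul_zero, mul_zero]
  · -- part (iii)
    intro hke ε hε
    obtain ⟨j, hj⟩ := hke
    have hk2 : k / 2 = j := by omega
    set l : ℂ := ε * Complex.I ^ (-(k:ℤ)) with hldef
    have hl2 : l * l = 1 := by
      have hI : (Complex.I ^ (-(k:ℤ))) * (Complex.I ^ (-(k:ℤ))) = 1 := by
        rw [← zpow_add₀ Complex.I_ne_zero]
        have h4 : (-(k:ℤ)) + (-(k:ℤ)) = 4 * (-(j:ℤ)) := by omega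
        rw [h4, _root_.zpow_mul]
        have h5 : Complex.I ^ (4:ℤ) = 1 := by
          rw [show (4:ℤ) = ((4:ℕ):ℤ) from rfl, zpow_natCast, Complex.I_pow_four]
        rw [h5, _root_.one_zpow]
      have : l * l = (ε * ε) * ((Complex.I ^ (-(k:ℤ))) * (Complex.I ^ (-(k:ℤ)))) := by ring
      rw [this, hI, mul_one]
      rcases hε with h | h <;> rw [h] <;> ring
    set i0 : Fin k := ⟨0, hk⟩
    have hD1 : ∀ r : Fin k → Bool, (ζ ^ ((k:ℤ) - 2*(wt r:ℤ)) = 1) ↔ wt r = j := by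
      intro r
      constructor
      · intro h
        have := zinj _ 0 (by rw [h, zpow_zero])
        omega
      · intro h
        have h0 : (k:ℤ) - 2*(wt r:ℤ) = 0 := by omega
        rw [h0, zpow_zero]
    have hmem : ∀ v : (Fin k → Bool) → ℂ,
        v ∈ (eigSub (Dmat k ζ) 1 ⊓ eigSub (Pmat k) l) ↔
          ((∀ r, wt r ≠ j → v r = 0) ∧ ∀ r, v (negt r) = l * v r) := by
      intro v
      rw [Submodule.mem_inf, mem_eigSub, mem_eigSub]
      constructor
      · rintro ⟨h1, h2⟩
        constructor
        · intro r hr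
          have ha := congrFun h1 r
          rw [Dmat, Matrix.mulVec_diagonal, Pi.smul_apply, smul_eq_mul, one_mul] at ha
          have hne : ζ ^ ((k:ℤ) - 2*(wt r:ℤ)) ≠ 1 := fun hcc => hr ((hD1 r).mp hcc)
          have hb : (ζ ^ ((k:ℤ) - 2*(wt r:ℤ)) - 1) * v r = 0 := by
            rw [sub_mul, one_mul, ha, sub_self]
          rcases mul_eq_zero.mp hb with h3 | h3
          · exact absurd (sub_eq_zero.mp h3) hne
          · exact h3
        · intro r
          have hb := congrFun h2 r
          rw [Pmat_mulVec, Pi.smul_apply, smul_eq_mul] at hb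
          exact hb
      · rintro ⟨hs, he⟩
        constructor
        · funext r
          rw [Dmat, Matrix.mulVec_diagonal, Pi.smul_apply, smul_eq_mul, one_mul]
          by_cases hr : wt r = j
          · rw [(hD1 r).mpr hr, one_mul]
          · rw [hs r hr, mul_zero]
        · funext r
          rw [Pmat_mulVec, Pi.smul_apply, smul_eq_mul]
          exact he r
    have key1 : ∀ r : Fin k → Bool, wt r = j → r i0 = false →
        (wt (negt r) = j ∧ negt r i0 = true) := by
      intro r h1 h2
      refine ⟨by rw [wt_negt, h1]; omega, by simp [negt, h2]⟩
    have key2 : ∀ r : Fin k → Bool, wt r = j → r i0 = true →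
        (wt (negt r) = j ∧ negt r i0 = false) := by
      intro r h1 h2
      refine ⟨by rw [wt_negt, h1]; omega, by simp [negt, h2]⟩
    let T := {r : Fin k → Bool // wt r = j ∧ r i0 = true}
    let e : ↥(eigSub (Dmat k ζ) 1 ⊓ eigSub (Pmat k) l) ≃ₗ[ℂ] (T → ℂ) := {
      toFun := fun v t => v.1 t.1
      invFun := fun x => ⟨fun r =>
        if h : wt r = j ∧ r i0 = true then x ⟨r, h⟩
        else if h2 : wt r = j ∧ r i0 = false then
          l * x ⟨negt r, key1 r h2.1 h2.2⟩
        else 0, by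
        rw [hmem]
        constructor
        · intro r hr
          rw [dif_neg (by tauto), dif_neg (by tauto)]
        · intro r
          by_cases h1 : wt r = j
          · by_cases h2 : r i0 = true
            · obtain ⟨hwn, hni⟩ := key2 r h1 h2
              rw [dif_neg (by simp [hni]), dif_pos ⟨hwn, hni⟩, dif_pos ⟨h1, h2⟩]
              congr 2
              · exact Subtype.ext (negt_negt r)
            · have h2' : r i0 = false := by simpa using h2
              obtain ⟨hwn, hni⟩ := key1 r h1 h2'
              rw [dif_pos ⟨hwn, hni⟩, dif_neg (by simp [h2']), dif_pos ⟨h1, h2'⟩,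
                ← mul_assoc, hl2, one_mul]
          · have hwn : ¬ wt (negt r) = j := by
              have := wt_le r
              rw [wt_negt]; omega
            rw [dif_neg (by tauto), dif_neg (by tauto), dif_neg (by tauto),
              dif_neg (by tauto), mul_zero]⟩
      left_inv := fun v => by
        obtain ⟨hs, he⟩ := (hmem v.1).mp v.2
        apply Subtype.ext
        funext r
        show (if h : wt r = j ∧ r i0 = true then v.1 r
          else if h2 : wt r = j ∧ r i0 = false then l * v.1 (negt r) else 0) = v.1 r
        by_cases h1 : wt r = j
        · by_cases h2 : r i0 = true
          · rw [dif_pos ⟨h1, h2⟩]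
          · have h2' : r i0 = false := by simpa using h2
            rw [dif_neg (by simp [h2']), dif_pos ⟨h1, h2'⟩]
            have := he r
            rw [this, ← mul_assoc, hl2, one_mul]
        · rw [dif_neg (by tauto), dif_neg (by tauto)]
          exact (hs r h1).symm
      right_inv := fun x => by
        funext t
        show (if h : wt t.1 = j ∧ t.1 i0 = true then x ⟨t.1, h⟩
          else if h2 : wt t.1 = j ∧ t.1 i0 = false then l * x ⟨negt t.1, key1 t.1 h2.1 h2.2⟩
          else 0) = x t
        rw [dif_pos t.2]
      map_add' := fun v w => rfl
      map_smul' := fun c v => rfl }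
    rw [e.finrank_eq, Module.finrank_pi]
    -- counting
    set S := Finset.univ.filter (fun r : Fin k → Bool => wt r = j) with hSdef
    have hA : Fintype.card T = (S.filter fun r => r i0 = true).card := by
      rw [Fintype.card_subtype]
      congr 1
      rw [hSdef, Finset.filter_filter]
    have hsplit := Finset.card_filter_add_card_filter_not
      (s := S) (p := fun r => r i0 = true)
    have hbij : (S.filter fun r => r i0 = true).card
        = (S.filter fun r => ¬ r i0 = true).card := by
      refine Finset.card_bij (fun r _ => negt r) ?_ ?_ ?_
      · intro r hr
        simp only [hSdef, Finset.mem_filter, Finset.mem_univ, true_and] at hr ⊢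
        obtain ⟨hwn, hni⟩ := key2 r hr.1 hr.2
        exact ⟨hwn, by simp [hni]⟩
      · intro a ha b hb hab
        have := congrArg negt hab
        rwa [negt_negt, negt_negt] at this
      · intro b hb
        simp only [hSdef, Finset.mem_filter, Finset.mem_univ, true_and] at hb ⊢
        have hb2 : b i0 = false := by simpa using hb.2
        obtain ⟨hwn, hni⟩ := key1 b hb.1 hb2
        exact ⟨negt b, ⟨hwn, hni⟩, negt_negt b⟩
    have hS : S.card = k.choose j := by
      rw [hSdef, ← Fintype.card_subtype (fun r : Fin k → Bool => wt r = j), card_wt_eq]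
    rw [hk2, hA, two_mul]
    nth_rewrite 2 [hbij]
    rw [hsplit, hS]
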